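/- A set B ⊆ V is a basis (inclusion-maximal independent set) of the matroid M = (V, ℐ) if and only if |B| = k and α_i ≤ |B ∩ χ⁻¹(i)| ≤ β_i for every color i. -/

import Mathlib

open Finset

variable {V : Type*} [DecidableEq V] [Fintype V]

/-- Number of vertices of color `i` in `X`. -/
def colorCount {c : ℕ} (χ : V → Fin c) (X : Finset V) (i : Fin c) : ℕ :=
  (X.filter (fun v => χ v = i)).card

/-- The family ℐ of independent sets: color upper bounds hold and there is
still room to satisfy all lower bounds within `k` elements
(`α i - colorCount χ X i` is truncated subtraction, i.e. `max 0 (α i - |X ∩ χ⁻¹ i|)`). -/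
def FairIndep {c : ℕ} (χ : V → Fin c) (α β : Fin c → ℕ) (k : ℕ) (X : Finset V) : Prop :=
  (∀ i, colorCount χ X i ≤ β i) ∧
    X.card + ∑ i, (α i - colorCount χ X i) ≤ k

/-!
If some color of a basis were below its lower bound `α i`, adding a vertex of that color (one
exists since `β i` vertices of each color are available) would keep the size plus the lower-bound
deficit unchanged, so the enlarged set would still be independent; hence a basis meets every
lower bound, its deficit vanishes and its size is at most `k`. If the size were below
`k ≤ ∑ β i`, some color would be below its upper bound, and adding a vertex of that color raises
size plus deficit by at most one. Conversely, every independent set has at most `k` elements,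
so a set of size `k` satisfying all bounds admits no proper independent superset.
-/

variable {W : Type*} {c : ℕ}

def lowerDeficit (χ : W → Fin c) (α : Fin c → ℕ) (X : Finset W) : ℕ :=
  ∑ i, (α i - colorCount χ X i)

variable {χ : W → Fin c} {α β : Fin c → ℕ} {k : ℕ}

theorem fairIndep_iff {X : Finset W} :
    FairIndep χ α β k X ↔
      (∀ i, colorCount χ X i ≤ β i) ∧ X.card + lowerDeficit χ α X ≤ k :=
  Iff.rfl

theorem lowerDeficit_eq_zero_iff {X : Finset W} :
    lowerDeficit χ α X = 0 ↔ ∀ i, α i ≤ colorCount χ X i := by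
  simp [lowerDeficit, Finset.sum_eq_zero_iff, Nat.sub_eq_zero_iff_le]

theorem sum_colorCount (X : Finset W) : ∑ i, colorCount χ X i = X.card :=
  (card_eq_sum_card_fiberwise fun x _ => mem_univ (χ x)).symm

theorem colorCount_insert [DecidableEq W] {X : Finset W} {v : W} (hv : v ∉ X) (i : Fin c) :
    colorCount χ (insert v X) i = colorCount χ X i + if χ v = i then 1 else 0 := by
  unfold colorCount
  rw [filter_insert]
  split_ifs
  · exact card_insert_of_notMem fun h => hv (mem_filter.1 h).1
  · rfl

theorem lowerDeficit_insert [DecidableEq W] {X : Finset W} {v : W} (hv : v ∉ X) :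
    lowerDeficit χ α (insert v X) + (if colorCount χ X (χ v) < α (χ v) then 1 else 0) =
      lowerDeficit χ α X := by
  have hind : (if colorCount χ X (χ v) < α (χ v) then 1 else 0) =
      ∑ j, if χ v = j then (if colorCount χ X j < α j then 1 else 0) else 0 := by
    simp
  rw [hind, lowerDeficit, lowerDeficit, ← sum_add_distrib]
  refine sum_congr rfl fun j _ => ?_
  rw [colorCount_insert hv]
  by_cases hj : χ v = j
  · subst hj
    simp only [if_true]
    split_ifs <;> omega
  · simp only [hj, if_false]
    omega

theorem exists_notMem_of_colorCount_lt [Fintype W] {X : Finset W} {i : Fin c}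
    (h : colorCount χ X i < colorCount χ univ i) : ∃ v ∉ X, χ v = i := by
  obtain ⟨v, hv, hvX⟩ := exists_mem_notMem_of_card_lt_card h
  exact ⟨v, fun h => hvX (mem_filter.2 ⟨h, (mem_filter.1 hv).2⟩), (mem_filter.1 hv).2⟩

theorem FairIndep.card_le {X : Finset W} (hX : FairIndep χ α β k X) : X.card ≤ k :=
  le_of_add_le_left (fairIndep_iff.1 hX).2

theorem FairIndep.exists_insert [DecidableEq W] [Fintype W] {X : Finset W}
    (hX : FairIndep χ α β k X) {i : Fin c}
    (hfull : β i ≤ colorCount χ univ i) (hiβ : colorCount χ X i < β i)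
    (hroom : colorCount χ X i < α i ∨ X.card + lowerDeficit χ α X < k) :
    ∃ v ∉ X, FairIndep χ α β k (insert v X) := by
  obtain ⟨hβ, hsize⟩ := fairIndep_iff.1 hX
  obtain ⟨v, hv, rfl⟩ := exists_notMem_of_colorCount_lt (hiβ.trans_le hfull)
  refine ⟨v, hv, fairIndep_iff.2 ⟨fun j => ?_, ?_⟩⟩
  · rw [colorCount_insert hv]
    split_ifs with hj
    · exact hj ▸ hiβ
    · exact hβ j
  · have hdef := lowerDeficit_insert (χ := χ) (α := α) hv
    rw [card_insert_of_notMem hv]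
    split_ifs at hdef <;> omega

theorem fairIndep_basis_iff_general {c : ℕ} (χ : V → Fin c) (α β : Fin c → ℕ) (k : ℕ)
    (hαβ : ∀ i, α i ≤ β i) (hk2 : k ≤ ∑ i, β i)
    (hfull : ∀ i, β i ≤ colorCount χ (Finset.univ : Finset V) i)
    (B : Finset V) :
    (FairIndep χ α β k B ∧
      ∀ B' : Finset V, FairIndep χ α β k B' → B ⊆ B' → B' = B) ↔
    (B.card = k ∧ ∀ i, α i ≤ colorCount χ B i ∧ colorCount χ B i ≤ β i) := by
  constructor
  · rintro ⟨hB, hmax⟩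
    have hstuck : ∀ i, colorCount χ B i < β i →
        ¬(colorCount χ B i < α i ∨ B.card + lowerDeficit χ α B < k) := fun i hiβ hroom => by
      obtain ⟨v, hv, hvB⟩ := hB.exists_insert (hfull i) hiβ hroom
      exact hv (insert_eq_self.1 (hmax _ hvB (subset_insert v B)))
    have hα : ∀ i, α i ≤ colorCount χ B i := fun i => by
      by_contra! h
      exact hstuck i (h.trans_le (hαβ i)) (Or.inl h)
    have hdef := lowerDeficit_eq_zero_iff.2 hα
    refine ⟨hB.card_le.antisymm (not_lt.1 fun hlt => ?_), fun i => ⟨hα i, hB.1 i⟩⟩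
    obtain ⟨i, -, hi⟩ : ∃ i ∈ univ, colorCount χ B i < β i :=
      exists_lt_of_sum_lt (by rw [sum_colorCount]; omega)
    exact hstuck i hi (Or.inr (by omega))
  · rintro ⟨hcard, hb⟩
    have hdef := lowerDeficit_eq_zero_iff.2 fun i => (hb i).1
    refine ⟨fairIndep_iff.2 ⟨fun i => (hb i).2, by omega⟩, fun B' hB' hsub => ?_⟩
    exact (eq_of_subset_of_card_le hsub (hcard ▸ hB'.card_le)).symm

theorem fairIndep_basis_iff {c : ℕ} (χ : V → Fin c) (α β : Fin c → ℕ) (k : ℕ)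
    (hαβ : ∀ i, α i ≤ β i) (hk1 : ∑ i, α i ≤ k) (hk2 : k ≤ ∑ i, β i)
    (hfull : ∀ i, β i ≤ colorCount χ (Finset.univ : Finset V) i)
    (B : Finset V) :
    (FairIndep χ α β k B ∧
      ∀ B' : Finset V, FairIndep χ α β k B' → B ⊆ B' → B' = B) ↔
    (B.card = k ∧ ∀ i, α i ≤ colorCount χ B i ∧ colorCount χ B i ≤ β i) :=
  fairIndep_basis_iff_general χ α β k hαβ hk2 hfull B
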